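/- With the chained-block configuration of R⁽¹⁾,…,R⁽ˢ⁾ as above, if r₁⋯rₛ > 0 and r'₁⋯r'ₛ > 0, rⱼ, r'ⱼ ≥ 0, rⱼ² + |wⱼ|² = r'ⱼ² + |w'ⱼ|² = 1 for all j, and the products R⁽¹⁾(r₁,w₁)⋯R⁽ˢ⁾(rₛ,wₛ) and R⁽¹⁾(r'₁,w'₁)⋯R⁽ˢ⁾(r'ₛ,w'ₛ) have equal first columns, then (rⱼ, wⱼ) = (r'ⱼ, w'ⱼ) for all j = 1,…,s. -/

import Mathlib

open Complex Matrix

/-- The `N×N` matrix equal to the identity except that the `SU(2)`-matrix `R(a,b)`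
(rows `(a,b)`, `(-b̄,ā)`) is embedded in rows/columns `p, q`. -/
def embedR (N : ℕ) (a b : ℂ) (p q : Fin N) : Matrix (Fin N) (Fin N) ℂ :=
  fun i j =>
    if i = p ∧ j = p then a
    else if i = p ∧ j = q then b
    else if i = q ∧ j = p then -(starRingEnd ℂ) b
    else if i = q ∧ j = q then (starRingEnd ℂ) a
    else if i = j then 1 else 0

/-!
The first column of `R⁽¹⁾⋯R⁽ˢ⁺¹⁾` is `r_{s+1}` times the first column of `R⁽¹⁾⋯R⁽ˢ⁾` minus
`w̄_{s+1} e_{s+1}`, and the first column of `R⁽¹⁾⋯R⁽ˢ⁾` vanishes in row `s+1`. Hence row `s+1` of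
equal first columns gives `w_{s+1} = w'_{s+1}`, the unit-norm condition and `r, r' ≥ 0` give
`r_{s+1} = r'_{s+1}`, and cancelling `r_{s+1} ≠ 0` leaves equal first columns of the shorter
products, so induction on `s` finishes.
-/
section

variable {N : ℕ}

lemma embedR_apply_of_ne (a b : ℂ) (p q i : Fin N) {c : Fin N} (hp : c ≠ p) (hq : c ≠ q) :
    embedR N a b p q i c = (1 : Matrix (Fin N) (Fin N) ℂ) i c := by
  simp [embedR, hp, hq, Matrix.one_apply]

lemma embedR_apply_left (a b : ℂ) {p q : Fin N} (hpq : p ≠ q) (i : Fin N) :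
    embedR N a b p q i p =
      a * (1 : Matrix (Fin N) (Fin N) ℂ) i p
        - starRingEnd ℂ b * (1 : Matrix (Fin N) (Fin N) ℂ) i q := by
  by_cases hip : i = p
  · simp [embedR, hip, hpq, Matrix.one_apply]
  · by_cases hiq : i = q
    · simp [embedR, hiq, hpq.symm, Matrix.one_apply]
    · simp [embedR, hip, hiq]

end

/-- `R⁽¹⁾(r₁,w₁)⋯R⁽ˢ⁾(rₛ,wₛ)`, the block `R⁽ʲ⁾` acting on the coordinates `0` and `j`. -/
def chainProd (N : ℕ) (r : ℕ → ℝ) (w : ℕ → ℂ) (s : ℕ) (hs : s < N) :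
    Matrix (Fin N) (Fin N) ℂ :=
  (List.ofFn (fun j : Fin s =>
    embedR N (r (j.1 + 1) : ℂ) (w (j.1 + 1)) ⟨0, Nat.zero_lt_of_lt hs⟩
      ⟨j.1 + 1, Nat.lt_of_le_of_lt j.isLt hs⟩)).prod

section

variable {N : ℕ} (r : ℕ → ℝ) (w : ℕ → ℂ)

lemma chainProd_zero (hN : 0 < N) : chainProd N r w 0 hN = 1 := by
  simp [chainProd]

lemma chainProd_succ (s : ℕ) (hs : s + 1 < N) :
    chainProd N r w (s + 1) hs = chainProd N r w s (by omega) *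
      embedR N (r (s + 1) : ℂ) (w (s + 1)) ⟨0, by omega⟩ ⟨s + 1, hs⟩ := by
  rw [chainProd, List.ofFn_succ', List.prod_concat]
  rfl

lemma chainProd_apply_of_lt (s : ℕ) (hs : s < N) (i c : Fin N) (hc : s < c.1) :
    chainProd N r w s hs i c = (1 : Matrix (Fin N) (Fin N) ℂ) i c := by
  induction s with
  | zero => rw [chainProd_zero]
  | succ s ih =>
    have h0 : c ≠ ⟨0, by omega⟩ := Fin.ne_of_val_ne (by simp only; omega)
    have h1 : c ≠ ⟨s + 1, hs⟩ := Fin.ne_of_val_ne (by simp only; omega)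
    rw [chainProd_succ, Matrix.mul_apply]
    simp_rw [embedR_apply_of_ne _ _ _ _ _ h0 h1]
    simp [Matrix.one_apply, ih (by omega) (by omega)]

lemma chainProd_apply_zero_succ (s : ℕ) (hs : s + 1 < N) (i : Fin N) :
    chainProd N r w (s + 1) hs i ⟨0, by omega⟩ =
      r (s + 1) * chainProd N r w s (by omega) i ⟨0, by omega⟩
        - starRingEnd ℂ (w (s + 1)) * (1 : Matrix (Fin N) (Fin N) ℂ) i ⟨s + 1, hs⟩ := by
  rw [chainProd_succ, Matrix.mul_apply]
  simp_rw [embedR_apply_left _ _ (p := ⟨0, by omega⟩) (q := ⟨s + 1, hs⟩) (by simp)]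
  simp [mul_sub, Finset.sum_sub_distrib, Matrix.one_apply, mul_comm,
    chainProd_apply_of_lt r w s _ i ⟨s + 1, hs⟩ (by simp)]


lemma chainProd_apply_zero_of_lt (s : ℕ) (hs : s < N) (i : Fin N) (hi : s < i.1) :
    chainProd N r w s hs i ⟨0, Nat.zero_lt_of_lt hs⟩ = 0 := by
  induction s with
  | zero => exact Matrix.one_apply_ne (Fin.ne_of_val_ne (by simp only; omega))
  | succ s ih =>
    rw [chainProd_apply_zero_succ, ih (by omega) (by omega),
      Matrix.one_apply_ne (Fin.ne_of_val_ne (by simp only; omega))]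
    simp

end

lemma eq_of_sq_add_normSq_eq_one {a a' : ℝ} {z : ℂ} (ha : 0 ≤ a) (ha' : 0 ≤ a')
    (h : a ^ 2 + normSq z = 1) (h' : a' ^ 2 + normSq z = 1) : a = a' :=
  (sq_eq_sq₀ ha ha').1 (by linarith)

theorem chainProd_col_zero_injective {N : ℕ} {r r' : ℕ → ℝ} {w w' : ℕ → ℂ} (n : ℕ)
    (hr0 : ∀ j, 1 ≤ j → j ≤ n → r j ≠ 0)
    (hr : ∀ j, 1 ≤ j → j ≤ n → 0 ≤ r j) (hr' : ∀ j, 1 ≤ j → j ≤ n → 0 ≤ r' j)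
    (hsu : ∀ j, 1 ≤ j → j ≤ n → r j ^ 2 + normSq (w j) = 1)
    (hsu' : ∀ j, 1 ≤ j → j ≤ n → r' j ^ 2 + normSq (w' j) = 1)
    (s : ℕ) (hsn : s ≤ n) (hs : s < N)
    (hcol : ∀ i, chainProd N r w s hs i ⟨0, Nat.zero_lt_of_lt hs⟩ =
      chainProd N r' w' s hs i ⟨0, Nat.zero_lt_of_lt hs⟩) :
    ∀ j, 1 ≤ j → j ≤ s → r j = r' j ∧ w j = w' j := by
  induction s with
  | zero => intro j h1 h2; omega
  | succ s ih =>
    have hw : w (s + 1) = w' (s + 1) := by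
      simpa [chainProd_apply_zero_succ, chainProd_apply_zero_of_lt] using
        congrArg (starRingEnd ℂ) (hcol ⟨s + 1, hs⟩)
    have hr_eq : r (s + 1) = r' (s + 1) :=
      eq_of_sq_add_normSq_eq_one (hr _ le_add_self hsn) (hr' _ le_add_self hsn)
        (hsu _ le_add_self hsn) (hw ▸ hsu' _ le_add_self hsn)
    have hcol_prev : ∀ i, chainProd N r w s (by omega) i ⟨0, by omega⟩ =
        chainProd N r' w' s (by omega) i ⟨0, by omega⟩ := fun i => by
      have := hcol i
      rw [chainProd_apply_zero_succ, chainProd_apply_zero_succ, hw, ← hr_eq, sub_left_inj] at this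
      exact mul_left_cancel₀ (ofReal_ne_zero.2 (hr0 _ le_add_self hsn)) this
    intro j h1 h2
    rcases (show j ≤ s ∨ j = s + 1 by omega) with hj | rfl
    · exact ih (by omega) (by omega) hcol_prev j h1 hj
    · exact ⟨hr_eq, hw⟩

/-- Key induction step of Lemma 2: in the chained-block configuration, if
`r₁⋯rₛ > 0`, `r'₁⋯r'ₛ > 0`, all `rⱼ, r'ⱼ ≥ 0` with `rⱼ² + |wⱼ|² = r'ⱼ² + |w'ⱼ|² = 1`,
and the two products have equal first columns, then `(rⱼ,wⱼ) = (r'ⱼ,w'ⱼ)` for all `j`. -/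
theorem stmt8 (N s : ℕ) (hN : s < N)
    (r r' : ℕ → ℝ) (w w' : ℕ → ℂ)
    (hr : ∀ j, 1 ≤ j → j ≤ s → 0 ≤ r j) (hr' : ∀ j, 1 ≤ j → j ≤ s → 0 ≤ r' j)
    (hsu : ∀ j, 1 ≤ j → j ≤ s → (r j) ^ 2 + Complex.normSq (w j) = 1)
    (hsu' : ∀ j, 1 ≤ j → j ≤ s → (r' j) ^ 2 + Complex.normSq (w' j) = 1)
    (hpos : 0 < ∏ j ∈ Finset.Icc 1 s, r j)
    (P P' : Matrix (Fin N) (Fin N) ℂ)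
    (hP : P = (List.ofFn (fun j : Fin s =>
      embedR N ((r (j.1 + 1) : ℝ) : ℂ) (w (j.1 + 1))
        ⟨0, by omega⟩ ⟨j.1 + 1, by have := j.isLt; omega⟩)).prod)
    (hP' : P' = (List.ofFn (fun j : Fin s =>
      embedR N ((r' (j.1 + 1) : ℝ) : ℂ) (w' (j.1 + 1))
        ⟨0, by omega⟩ ⟨j.1 + 1, by have := j.isLt; omega⟩)).prod)
    (hcol : ∀ i : Fin N, P i ⟨0, by omega⟩ = P' i ⟨0, by omega⟩) :
    ∀ j, 1 ≤ j → j ≤ s → r j = r' j ∧ w j = w' j := by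
  subst hP hP'
  have hr0 : ∀ j, 1 ≤ j → j ≤ s → r j ≠ 0 := fun j h1 h2 =>
    Finset.prod_ne_zero_iff.1 hpos.ne' j (Finset.mem_Icc.2 ⟨h1, h2⟩)
  exact chainProd_col_zero_injective s hr0 hr hr' hsu hsu' s le_rfl hN hcol
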